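/- Fix demands f_1, f_2 ≥ 0 with f_1 + f_2 = 1, and substitute x_i^b = f_i − x_i^s for i = 1,2, where x_i^s ∈ [0, f_i]. If C_i^t ≥ C_i^c > 0, then for any fixed x_j^s ∈ [0, f_j], the function x_i^s ↦ J_i^s(x_i^s, x_j^s) = C_i^t(x_i^s + f_j − x_j^s) + C_i^c (f_i − x_i^s)(x_i^s + f_j − x_j^s) is monotonically nondecreasing on [0, f_i]. -/
import Mathlib

/-- With `x_i^b = f_i - x_i^s`, if `C_i^t ≥ C_i^c > 0` then
`x_i^s ↦ J_i^s(x_i^s, x_j^s)` is nondecreasing on `[0, f_i]`. -/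
theorem steadfast_cost_monotone_in_own_flow
    (f₁ f₂ : ℝ) (hf₁ : 0 ≤ f₁) (hf₂ : 0 ≤ f₂) (hsum : f₁ + f₂ = 1)
    (fi fj : ℝ) (hij : (fi = f₁ ∧ fj = f₂) ∨ (fi = f₂ ∧ fj = f₁))
    (Cit Cic : ℝ) (hCic : 0 < Cic) (hC : Cic ≤ Cit)
    (xjs : ℝ) (hxjs : xjs ∈ Set.Icc (0:ℝ) fj) :
    MonotoneOn (fun xis : ℝ =>
        Cit * (xis + fj - xjs) + Cic * (fi - xis) * (xis + fj - xjs))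
      (Set.Icc (0:ℝ) fi) := by
  have hfij : fi + fj = 1 := by rcases hij with ⟨h1, h2⟩ | ⟨h1, h2⟩ <;> subst h1 <;> subst h2 <;> linarith
  intro a ha b hb hab
  obtain ⟨ha0, ha1⟩ := ha
  obtain ⟨hb0, hb1⟩ := hb
  obtain ⟨hx0, hx1⟩ := hxjs
  simp only
  have key : Cit * (b + fj - xjs) + Cic * (fi - b) * (b + fj - xjs)
      - (Cit * (a + fj - xjs) + Cic * (fi - a) * (a + fj - xjs))
      = (b - a) * (Cit - Cic * (a + b - fi + fj - xjs)) := by ring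
  have h2 : Cic * (a + b - fi + fj - xjs) ≤ Cic * 1 :=
    mul_le_mul_of_nonneg_left (by linarith) hCic.le
  have h3 : 0 ≤ (b - a) * (Cit - Cic * (a + b - fi + fj - xjs)) :=
    mul_nonneg (by linarith) (by linarith)
  linarith
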